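/- The graph obtained from the complete graph K_{n-1} (n ≥ 5) by adding a new vertex v joined to exactly three vertices of K_{n-1} has binomial(n,2) - n + 4 edges, is bridgeless, and has no orientation of diameter two. -/

import Mathlib

open SimpleGraph

/-- `R` is an orientation of the simple graph `G`: every arc of `R` lies on an edge of `G`,
and every edge of `G` receives exactly one of its two possible directions. -/
def IsOrientation {V : Type*} (G : SimpleGraph V) (R : V → V → Prop) : Prop :=
  (∀ u v, R u v → G.Adj u v) ∧ ∀ u v, G.Adj u v → (R u v ↔ ¬ R v u)

/-- `RelPow R k u v` : there is a directed walk of length `k` from `u` to `v`. -/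
def RelPow {V : Type*} (R : V → V → Prop) : ℕ → V → V → Prop
  | 0, u, v => u = v
  | n + 1, u, v => ∃ w, R u w ∧ RelPow R n w v

/-- The digraph `R` has diameter at most `d`: any vertex can reach any other by a
directed walk of length at most `d`. -/
def DiamLE {V : Type*} (R : V → V → Prop) (d : ℕ) : Prop :=
  ∀ u v, ∃ k ≤ d, RelPow R k u v

/-- A digraph is strongly connected if every vertex can reach every other. -/
def StronglyConnected {V : Type*} (R : V → V → Prop) : Prop :=
  ∀ u v, Relation.ReflTransGen R u v

/-- A graph is bridgeless if it is connected and contains no bridge. -/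
def Bridgeless {V : Type*} (G : SimpleGraph V) : Prop :=
  G.Connected ∧ ∀ e, ¬ G.IsBridge e

/-- The graph `G_{n,d}`: the path `u_1 … u_d` is the set of indices `0,…,d-1`,
the clique `K_{n-d-1}` is the set of indices `d,…,n-2`, both endpoints `0` and `d-1`
of the path are joined to all clique vertices, and the extra vertex `u_3'` is the
index `n-1`, joined to `u_2, u_3, u_4`, i.e. to indices `1, 2, 3`. -/
def Gnd (n d : ℕ) : SimpleGraph (Fin n) :=
  SimpleGraph.fromRel (fun i j =>
    ((i : ℕ) + 1 = (j : ℕ) ∧ (j : ℕ) < d) ∨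
    (d ≤ (i : ℕ) ∧ (i : ℕ) < n - 1 ∧ d ≤ (j : ℕ) ∧ (j : ℕ) < n - 1) ∨
    (((i : ℕ) = 0 ∨ (i : ℕ) = d - 1) ∧ d ≤ (j : ℕ) ∧ (j : ℕ) < n - 1) ∨
    ((i : ℕ) = n - 1 ∧ ((j : ℕ) = 1 ∨ (j : ℕ) = 2 ∨ (j : ℕ) = 3)))

/-- The graph `H_{n,n-2}`: the cycle `u_1 … u_{n-1} u_1` is the set of indices
`0,…,n-2` in cyclic order, and the extra vertex `u_3'` is the index `n-1`,
joined to `u_2, u_3, u_4`, i.e. to indices `1, 2, 3`. -/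
def Hgraph (n : ℕ) : SimpleGraph (Fin n) :=
  SimpleGraph.fromRel (fun i j =>
    ((i : ℕ) + 1 = (j : ℕ) ∧ (j : ℕ) ≤ n - 2) ∨
    ((i : ℕ) = 0 ∧ (j : ℕ) = n - 2) ∨
    ((i : ℕ) = n - 1 ∧ ((j : ℕ) = 1 ∨ (j : ℕ) = 2 ∨ (j : ℕ) = 3)))

open Finset

/-!
The edges missing from the graph form a star at the new vertex `v`, with `n - 4` leaves, which
gives the edge count. Any two distinct vertices have a common neighbour, so every edge lies on a
triangle and there is no bridge.

In an orientation of diameter two, a vertex `v` with a non-neighbour `w` has two in-neighbours: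
if `b` were the only one, every vertex other than `v` and `b` would have to enter `v` through `b`,
so `b` could only leave towards `v`, and `b` could not reach `w` in two steps. Reversing the
orientation gives two out-neighbours as well, so `v` would have degree at least four; but it has
degree three.
-/

namespace SimpleGraph

variable {V : Type*} {G : SimpleGraph V} {u v w : V}

theorem not_isBridge_of_adj_of_adj (huw : G.Adj u w) (hwv : G.Adj w v) :
    ¬ G.IsBridge s(u, v) := by
  rw [isBridge_iff, not_not]
  have hdel : ∀ {x y}, G.Adj x y → w ∈ ({x, y} : Set V) →
      (G.deleteEdges {s(u, v)}).Adj x y :=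
    fun {x y} hxy hw => by
      refine (deleteEdges_adj ..).2 ⟨hxy, fun he => ?_⟩
      simp only [Set.mem_singleton_iff, Sym2.eq_iff] at he
      rcases hw with rfl | rfl <;> rcases he with ⟨rfl, rfl⟩ | ⟨rfl, rfl⟩ <;>
        simp_all
  exact (hdel huw (by simp)).reachable.trans (hdel hwv (by simp)).reachable

theorem bridgeless_of_forall_exists_adj_adj [Nonempty V]
    (h : ∀ u v, u ≠ v → ∃ w, G.Adj u w ∧ G.Adj w v) : Bridgeless G := by
  have hreach : ∀ u v, G.Reachable u v := fun u v => by
    obtain rfl | huv := eq_or_ne u v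
    · rfl
    · obtain ⟨w, huw, hwv⟩ := h u v huv
      exact huw.reachable.trans hwv.reachable
  refine ⟨(connected_iff G).2 ⟨hreach, inferInstance⟩, Sym2.ind fun u v => ?_⟩
  obtain rfl | huv := eq_or_ne u v
  · simp [isBridge_iff]
  · obtain ⟨w, huw, hwv⟩ := h u v huv
    exact not_isBridge_of_adj_of_adj huw hwv

theorem card_edgeFinset_eq_degree_of_forall_adj [Fintype V] [DecidableEq V] [DecidableRel G.Adj]
    (h : ∀ x y, G.Adj x y → x = v ∨ y = v) : #G.edgeFinset = G.degree v := by
  rw [← card_incidenceFinset_eq_degree]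
  congr 1
  ext e
  induction e using Sym2.ind with
  | _ x y =>
    simp only [mem_incidenceFinset, incidenceSet, Set.mem_ofPred_eq, mem_edgeFinset, mem_edgeSet]
    exact ⟨fun hxy => ⟨hxy, by rcases h x y hxy with rfl | rfl <;> simp⟩, And.left⟩

end SimpleGraph

section Orientation

variable {V : Type*} {G : SimpleGraph V} {R : V → V → Prop} {u v w : V}

theorem IsOrientation.adj (hR : IsOrientation G R) (h : R u v) : G.Adj u v := hR.1 u v h

theorem IsOrientation.asymm (hR : IsOrientation G R) (h : R u v) : ¬ R v u :=
  (hR.2 u v (hR.adj h)).1 h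

theorem IsOrientation.flip (hR : IsOrientation G R) : IsOrientation G (flip R) :=
  ⟨fun _ _ h => (hR.adj h).symm, fun u v h => hR.2 v u h.symm⟩

theorem diamLE_two_iff : DiamLE R 2 ↔ ∀ u v, u = v ∨ R u v ∨ ∃ w, R u w ∧ R w v := by
  refine forall₂_congr fun u v => ⟨?_, ?_⟩
  · rintro ⟨k, hk, hp⟩
    interval_cases k
    · exact Or.inl hp
    · obtain ⟨w, h, rfl⟩ := hp
      exact Or.inr (Or.inl h)
    · obtain ⟨w, h, x, h', rfl⟩ := hp
      exact Or.inr (Or.inr ⟨w, h, h'⟩)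
  · rintro (h | h | ⟨w, h, h'⟩)
    · exact ⟨0, by norm_num, h⟩
    · exact ⟨1, by norm_num, v, h, rfl⟩
    · exact ⟨2, le_rfl, w, h, v, h', rfl⟩

theorem DiamLE.flip_two (hD : DiamLE R 2) : DiamLE (flip R) 2 := by
  rw [diamLE_two_iff] at hD ⊢
  intro u v
  rcases hD v u with h | h | ⟨w, h, h'⟩
  exacts [Or.inl h.symm, Or.inr (Or.inl h), Or.inr (Or.inr ⟨w, h', h⟩)]

theorem IsOrientation.exists_ne_into_of_not_adj (hR : IsOrientation G R) (hD : DiamLE R 2)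
    (hvw : v ≠ w) (hadj : ¬ G.Adj v w) : ∃ x y, x ≠ y ∧ R x v ∧ R y v := by
  rw [diamLE_two_iff] at hD
  obtain ⟨b, hwb, hbv⟩ : ∃ b, R w b ∧ R b v := by
    rcases hD w v with h | h | h
    · exact absurd h.symm hvw
    · exact absurd (hR.adj h).symm hadj
    · exact h
  by_contra! hb
  have hin : ∀ x, R x v → x = b := fun x hx => by_contra fun hxb => hb x b hxb hx hbv
  have hout : ∀ x, R b x → x = v := fun x hbx => by
    rcases hD x v with rfl | h | ⟨y, hxy, hyv⟩
    · rfl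
    · obtain rfl := hin x h
      exact absurd hbx (hR.asymm hbx)
    · obtain rfl := hin y hyv
      exact absurd hxy (hR.asymm hbx)
  rcases hD b w with rfl | h | ⟨x, hbx, hxw⟩
  · exact hR.asymm hwb hwb
  · exact hR.asymm hwb h
  · obtain rfl := hout x hbx
    exact hadj (hR.adj hxw)

theorem IsOrientation.exists_ne_out_of_not_adj (hR : IsOrientation G R) (hD : DiamLE R 2)
    (hvw : v ≠ w) (hadj : ¬ G.Adj v w) : ∃ x y, x ≠ y ∧ R v x ∧ R v y :=
  hR.flip.exists_ne_into_of_not_adj hD.flip_two hvw hadj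

theorem IsOrientation.four_le_degree_of_not_adj [Fintype (G.neighborSet v)]
    (hR : IsOrientation G R) (hD : DiamLE R 2) (hvw : v ≠ w) (hadj : ¬ G.Adj v w) :
    4 ≤ G.degree v := by
  classical
  obtain ⟨x, x', hxx', hx, hx'⟩ := hR.exists_ne_into_of_not_adj hD hvw hadj
  obtain ⟨y, y', hyy', hy, hy'⟩ := hR.exists_ne_out_of_not_adj hD hvw hadj
  have hne : ∀ {a b}, R a v → R v b → a ≠ b := fun ha hb h => hR.asymm ha (h ▸ hb)
  have hsub : {x, x', y, y'} ⊆ G.neighborFinset v := by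
    simp only [insert_subset_iff, singleton_subset_iff, mem_neighborFinset]
    exact ⟨(hR.adj hx).symm, (hR.adj hx').symm, hR.adj hy, hR.adj hy'⟩
  rw [← card_neighborFinset_eq_degree]
  calc 4 = #{x, x', y, y'} := (card_eq_four.2 ⟨x, x', y, y', hxx', hne hx hy, hne hx hy',
          hne hx' hy, hne hx' hy', hyy', rfl⟩).symm
    _ ≤ _ := card_le_card hsub

end Orientation

namespace SimpleGraph

variable {V : Type*} {v : V}

def attachToComplete (v : V) (S : Set V) : SimpleGraph V :=
  fromRel fun x y => x ≠ v ∧ y ≠ v ∨ x = v ∧ y ∈ S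

theorem attachToComplete_adj {S : Set V} {x y : V} :
    (attachToComplete v S).Adj x y ↔
      x ≠ y ∧ (x ≠ v ∧ y ≠ v ∨ x = v ∧ y ∈ S ∨ y = v ∧ x ∈ S) := by
  simp only [attachToComplete, fromRel_adj]
  tauto

instance [DecidableEq V] (v : V) (S : Finset V) :
    DecidableRel (attachToComplete v (S : Set V)).Adj :=
  fun _ _ => decidable_of_iff' _ attachToComplete_adj

variable [Fintype V] [DecidableEq V] {S : Finset V}

theorem neighborFinset_attachToComplete (hv : v ∉ S) :
    (attachToComplete v S).neighborFinset v = S := by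
  ext x
  rw [mem_neighborFinset, attachToComplete_adj]
  grind

theorem degree_attachToComplete (hv : v ∉ S) : (attachToComplete v S).degree v = #S := by
  rw [← card_neighborFinset_eq_degree, neighborFinset_attachToComplete hv]

theorem card_edgeFinset_attachToComplete (hv : v ∉ S) :
    #(attachToComplete v S).edgeFinset =
      (Fintype.card V).choose 2 - (Fintype.card V - 1 - #S) := by
  set G := attachToComplete v S
  have hstar : ∀ x y, Gᶜ.Adj x y → x = v ∨ y = v := fun x y hxy => by
    rw [compl_adj, attachToComplete_adj] at hxy
    tauto
  have hsplit : G.edgeFinset = (⊤ : SimpleGraph V).edgeFinset \ Gᶜ.edgeFinset := by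
    ext e
    rw [← edgeFinset_sdiff, mem_edgeFinset, mem_edgeFinset, top_sdiff, compl_compl]
  rw [hsplit, card_sdiff_of_subset (edgeFinset_mono le_top),
    card_edgeFinset_top_eq_card_choose_two, card_edgeFinset_eq_degree_of_forall_adj hstar,
    degree_compl, degree_attachToComplete hv]

theorem exists_adj_adj_attachToComplete (hv : v ∉ S) (hS : 1 < #S) (hV : 3 < Fintype.card V)
    {x y : V} (hxy : x ≠ y) :
    ∃ z, (attachToComplete v S).Adj x z ∧ (attachToComplete v S).Adj z y := by
  simp only [attachToComplete_adj]
  by_cases hxv : x = v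
  · obtain ⟨s, hs, hsy⟩ := exists_mem_ne hS y
    exact ⟨s, by grind⟩
  by_cases hyv : y = v
  · obtain ⟨s, hs, hsx⟩ := exists_mem_ne hS x
    exact ⟨s, by grind⟩
  have hcard : #{x, y, v} < #(univ : Finset V) := card_le_three.trans_lt hV
  obtain ⟨z, -, hz⟩ := exists_mem_notMem_of_card_lt_card hcard
  exact ⟨z, by grind⟩

end SimpleGraph

theorem stmt_18 (n : ℕ) (hn : 5 ≤ n) :
    (SimpleGraph.fromRel (fun i j : Fin n =>
        ((i : ℕ) < n - 1 ∧ (j : ℕ) < n - 1) ∨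
        ((i : ℕ) = n - 1 ∧ (j : ℕ) < 3))).edgeSet.ncard
        = Nat.choose n 2 - n + 4 ∧
    Bridgeless (SimpleGraph.fromRel (fun i j : Fin n =>
        ((i : ℕ) < n - 1 ∧ (j : ℕ) < n - 1) ∨
        ((i : ℕ) = n - 1 ∧ (j : ℕ) < 3))) ∧
    ¬ ∃ R : Fin n → Fin n → Prop,
        IsOrientation (SimpleGraph.fromRel (fun i j : Fin n =>
          ((i : ℕ) < n - 1 ∧ (j : ℕ) < n - 1) ∨
          ((i : ℕ) = n - 1 ∧ (j : ℕ) < 3))) R ∧ DiamLE R 2 := by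
  let v : Fin n := ⟨n - 1, by omega⟩
  let S : Finset (Fin n) := Iio ⟨3, by omega⟩
  have hG : SimpleGraph.fromRel (fun i j : Fin n =>
      ((i : ℕ) < n - 1 ∧ (j : ℕ) < n - 1) ∨ ((i : ℕ) = n - 1 ∧ (j : ℕ) < 3)) =
      attachToComplete v S := by
    ext i j
    have := i.isLt
    have := j.isLt
    simp only [fromRel_adj, attachToComplete_adj, v, S, coe_Iio, Set.mem_Iio, Fin.lt_def,
      ne_eq, Fin.ext_iff]
    omega
  have hv : v ∉ S := by simp [v, S, Fin.lt_def]; omega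
  have hS : #S = 3 := Fin.card_Iio _
  have : Nonempty (Fin n) := ⟨v⟩
  rw [hG]
  refine ⟨?_, bridgeless_of_forall_exists_adj_adj fun x y hxy =>
    exists_adj_adj_attachToComplete hv (by omega) (by simp; omega) hxy, ?_⟩
  · have hchoose : n ≤ n.choose 2 := by
      rw [Nat.choose_two_right, Nat.le_div_iff_mul_le two_pos]
      exact Nat.mul_le_mul_left n (by omega)
    rw [Set.ncard_eq_toFinset_card', ← edgeFinset, card_edgeFinset_attachToComplete hv,
      Fintype.card_fin, hS]
    omega
  · rintro ⟨R, hR, hD⟩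
    have hdeg := hR.four_le_degree_of_not_adj hD (v := v) (w := ⟨3, by omega⟩)
      (by simp [v, Fin.ext_iff]; omega) (by simp [attachToComplete_adj, v, S, Fin.lt_def]; omega)
    rw [degree_attachToComplete hv, hS] at hdeg
    omega
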